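/- For fixed probability distribution Q on X̂ with full support, the function s ↦ −Σ_x P(x) ln(Σ_{x̂} Q(x̂) e^{−s·d(x,x̂)}) − sD is concave on [0,∞). -/

import Mathlib

/-! For each `x`, `s ↦ log ∑ Q(x̂) e^{-s d(x,x̂)}` is convex: Hölder's inequality with
exponents `1/a`, `1/b` bounds the sum at `a s + b t` by the `a`-th power of the sum at `s`
times the `b`-th power of the sum at `t`. A nonnegative combination of convex functions is
convex and `s D` is linear, so `F(·, Q)` is concave. -/

open Real Finset

theorem convexOn_finset_sum {𝕜 E β ι : Type*} [Semiring 𝕜] [PartialOrder 𝕜]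
    [AddCommMonoid E] [AddCommMonoid β] [PartialOrder β] [IsOrderedAddMonoid β] [SMul 𝕜 E]
    [DistribMulAction 𝕜 β]
    {s : Set E} (hs : Convex 𝕜 s) (t : Finset ι) {f : ι → E → β}
    (hf : ∀ i ∈ t, ConvexOn 𝕜 s (f i)) : ConvexOn 𝕜 s fun x => ∑ i ∈ t, f i x := by
  classical
  induction t using Finset.induction_on with
  | empty => exact ⟨hs, fun _ _ _ _ _ _ _ _ _ => by simp⟩
  | insert i t hi ih =>
    simp only [Finset.sum_insert hi]
    exact (hf i (mem_insert_self i t)).add (ih fun j hj => hf j (mem_insert_of_mem hj))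

theorem Real.sum_rpow_mul_rpow_le {ι : Type*} (s : Finset ι) {f g : ι → ℝ}
    (hf : ∀ i ∈ s, 0 ≤ f i) (hg : ∀ i ∈ s, 0 ≤ g i) {a b : ℝ} (ha : 0 < a)
    (hb : 0 < b) (hab : a + b = 1) :
    ∑ i ∈ s, f i ^ a * g i ^ b ≤ (∑ i ∈ s, f i) ^ a * (∑ i ∈ s, g i) ^ b := by
  have hpq : (1 / a).HolderConjugate (1 / b) := by
    rw [Real.holderConjugate_iff]
    refine ⟨?_, ?_⟩
    · rw [one_div, one_lt_inv₀ ha]; linarith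
    · simpa using hab
  have key := Real.inner_le_Lp_mul_Lq_of_nonneg s hpq
    (fun i hi => rpow_nonneg (hf i hi) a) (fun i hi => rpow_nonneg (hg i hi) b)
  have cancel : ∀ {c x : ℝ}, 0 < c → 0 ≤ x → (x ^ c) ^ (1 / c) = x := fun hc hx => by
    rw [← rpow_mul hx, mul_one_div_cancel hc.ne', rpow_one]
  simpa only [one_div_one_div, Finset.sum_congr rfl fun i hi => cancel ha (hf i hi),
    Finset.sum_congr rfl fun i hi => cancel hb (hg i hi)] using key

theorem Real.mul_exp_rpow_mul_mul_exp_rpow {w : ℝ} (hw : 0 ≤ w) (u v : ℝ) {a b : ℝ}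
    (hab : a + b = 1) :
    (w * exp u) ^ a * (w * exp v) ^ b = w * exp (a * u + b * v) := by
  rw [mul_rpow hw (exp_pos u).le, mul_rpow hw (exp_pos v).le, ← exp_mul, ← exp_mul,
    mul_mul_mul_comm, ← rpow_add' hw (hab ▸ one_ne_zero), hab, rpow_one, ← exp_add]
  ring_nf

theorem convexOn_log_sum_mul_exp {ι : Type*} [Fintype ι] {w : ι → ℝ} (hw : ∀ i, 0 ≤ w i)
    (c : ι → ℝ) : ConvexOn ℝ Set.univ fun t => log (∑ i, w i * exp (t * c i)) := by
  by_cases hzero : ∀ i, w i = 0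
  · simpa [hzero] using convexOn_const (0 : ℝ) convex_univ
  obtain ⟨j, hj⟩ := not_forall.mp hzero
  have hpos : ∀ t, 0 < ∑ i, w i * exp (t * c i) := fun t =>
    Finset.sum_pos' (fun i _ => mul_nonneg (hw i) (exp_pos _).le)
      ⟨j, mem_univ j, mul_pos ((hw j).lt_of_ne' hj) (exp_pos _)⟩
  refine convexOn_iff_forall_pos.mpr ⟨convex_univ, fun s _ t _ a b ha hb hab => ?_⟩
  have holder := Real.sum_rpow_mul_rpow_le univ
    (fun i _ => mul_nonneg (hw i) (exp_pos (s * c i)).le)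
    (fun i _ => mul_nonneg (hw i) (exp_pos (t * c i)).le) ha hb hab
  simp only [Real.mul_exp_rpow_mul_mul_exp_rpow (hw _) _ _ hab] at holder
  calc log (∑ i, w i * exp ((a • s + b • t) * c i))
      ≤ log ((∑ i, w i * exp (s * c i)) ^ a * (∑ i, w i * exp (t * c i)) ^ b) := by
        refine log_le_log (hpos _) (le_of_eq_of_le ?_ holder)
        congr! 3 with i; simp only [smul_eq_mul]; ring
    _ = a • log (∑ i, w i * exp (s * c i)) + b • log (∑ i, w i * exp (t * c i)) := by
        rw [log_mul (rpow_pos_of_pos (hpos s) a).ne' (rpow_pos_of_pos (hpos t) b).ne',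
          log_rpow (hpos s), log_rpow (hpos t), smul_eq_mul, smul_eq_mul]

theorem F_concave_in_s_general (X Xhat : Type*) [Fintype X] [Fintype Xhat]
    (P : X → ℝ) (hP : ∀ x, 0 ≤ P x)
    (Q : Xhat → ℝ) (hQ : ∀ xh, 0 < Q xh)
    (d : X → Xhat → ℝ)
    (D : ℝ) :
    ConcaveOn ℝ (Set.Ici (0 : ℝ))
      (fun s => -(∑ x, P x * Real.log (∑ xh, Q xh * Real.exp (-(s * d x xh))))
        - s * D) := by
  have hlog : ∀ x, ConvexOn ℝ (Set.Ici 0)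
      fun s => log (∑ xh, Q xh * exp (-(s * d x xh))) := fun x => by
    simpa only [mul_neg] using (convexOn_log_sum_mul_exp (fun xh => (hQ xh).le)
      (fun xh => -d x xh)).subset (Set.subset_univ _) (convex_Ici 0)
  have hsum := convexOn_finset_sum (convex_Ici 0) univ fun x _ => (hlog x).smul (hP x)
  simp only [smul_eq_mul] at hsum
  exact hsum.neg.sub ((LinearMap.mulRight ℝ D).convexOn (convex_Ici 0))

/-- For a fixed fully supported distribution `Q` on `X̂`, the function
`s ↦ -∑ₓ P(x) ln(∑_{x̂} Q(x̂) e^{-s d(x,x̂)}) - s D` is concave on `[0,∞)`. -/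
theorem F_concave_in_s (X Xhat : Type*) [Fintype X] [Fintype Xhat]
    (P : X → ℝ) (hP : ∀ x, 0 ≤ P x) (hPsum : ∑ x, P x = 1)
    (Q : Xhat → ℝ) (hQ : ∀ xh, 0 < Q xh) (hQsum : ∑ xh, Q xh = 1)
    (d : X → Xhat → ℝ) (hd : ∀ x xh, 0 ≤ d x xh)
    (D : ℝ) (hD : 0 ≤ D) :
    ConcaveOn ℝ (Set.Ici (0 : ℝ))
      (fun s => -(∑ x, P x * Real.log (∑ xh, Q xh * Real.exp (-(s * d x xh))))
        - s * D) :=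
  F_concave_in_s_general X Xhat P hP Q hQ d D
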